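/- (Theorem 5, part 2: Generalized Inverse Gaussian / Gamma full conditionals of D̃.) Let G be a graph on {1,…,p} with edge set E such that the identity ordering is a Generalized Bartlett ordering of G, let U be symmetric positive definite, and δ ∈ (0,∞)^p. Define the density in (L_I, D̃) coordinates π̃(L_I,D̃) = (∏_{k=1}^{p−1} D̃_k^{p−k}) · π*_{U,δ}(L_I, D(D̃)). Fix 1 ≤ k ≤ p, fix all of L_I at arbitrary real values and all D̃_{k'} for k' ≠ k at arbitrary positive values. Then there exist constants C > 0, a > 0 and b ≥ 0 (depending on the fixed values) such that for all t > 0, π̃ with D̃_k := t equals C · t^{α_k} · exp(−a t − b/t), where α_k = (p−k) + ∑_{l=k}^{p} (δ_l + 2ν_l)/2; moreover for k = 1 one may take b = 0 (a Gamma kernel), while for k ≥ 2 the conditional is a Generalized Inverse Gaussian kernel. -/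

import Mathlib

/-!
Fix everything except `t = D̃_k`. Then `D_j = t c_j` for `j ≥ k`, while `D_j` is constant for
`j < k`. Every entry of `L` has the form `a + b / t`: free entries and columns `j < k` do not
depend on `t`, entries outside `D^σ(E)` vanish, and a fill-in entry of a column `j ≥ k` is
`-∑_{m<j} L_im L_jm D_m / D_j`. There a summand with `m < k` is a constant over `t c_j`, and for
`m ≥ k` the ratio `D_m / D_j` is constant while, by the GB property, one of `L_im`, `L_jm` is a
free entry (else `i, j, m` would be a triangle of fill-ins), so induction on the column applies.
Hence `tr(ΩU) = ∑_j D_j L_jᵀ U L_j = a t + Q + b / t` with `b ≥ 0`, and `a > 0` because `U` is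
positive definite and `L_kk = 1`. For `k = 1` all `D_j` scale by `t`, which leaves `L` unchanged,
so `b = 0`. The remaining monomial factors give `t ^ α_k`.
-/

open SimpleGraph

variable {V : Type*}

/-- One step of the elimination/triangulation process: at step `k` (0-based) the vertex with
label `k` is eliminated, and all pairs of its neighbours with larger labels are joined. -/
def triStep {n : ℕ} (σ : V ≃ Fin n) (H : SimpleGraph V) (k : ℕ) : SimpleGraph V where
  Adj u v := H.Adj u v ∨
    (u ≠ v ∧ ∃ hk : k < n, k < (σ u : ℕ) ∧ k < (σ v : ℕ) ∧
      H.Adj u (σ.symm ⟨k, hk⟩) ∧ H.Adj v (σ.symm ⟨k, hk⟩))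
  symm := ⟨by
    rintro u v (h | ⟨hne, hk, h1, h2, h3, h4⟩)
    · exact Or.inl h.symm
    · exact Or.inr ⟨hne.symm, hk, h2, h1, h4, h3⟩⟩
  loopless := ⟨by
    rintro u (h | ⟨hne, _⟩)
    · exact H.loopless.irrefl u h
    · exact hne rfl⟩

/-- The sequence of graphs `E_0, E_1, …` in the triangulation process. -/
def triSeq {n : ℕ} (σ : V ≃ Fin n) (G : SimpleGraph V) : ℕ → SimpleGraph V
  | 0 => G
  | k + 1 => triStep σ (triSeq σ G k) k

/-- The triangulation `D^σ(G)` of `G` under the ordering `σ` (`p − 2` elimination steps). -/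
def triangulation {n : ℕ} (σ : V ≃ Fin n) (G : SimpleGraph V) : SimpleGraph V :=
  triSeq σ G (n - 2)

/-- `σ` is a perfect elimination ordering of `G`: for every `j`, the vertex `σ⁻¹(j)` together
with its higher-labelled neighbours forms a clique. -/
def IsPerfectElimOrdering {n : ℕ} (σ : V ≃ Fin n) (G : SimpleGraph V) : Prop :=
  ∀ j : Fin n,
    G.IsClique ({σ.symm j} ∪ {v : V | (j : ℕ) < (σ v : ℕ) ∧ G.Adj v (σ.symm j)})

/-- A graph is decomposable (chordal) if it has no induced cycle of length `≥ 4`. -/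
def IsDecomposable (G : SimpleGraph V) : Prop :=
  ∀ n : ℕ, 4 ≤ n → IsEmpty (SimpleGraph.cycleGraph n ↪g G)

/-- `σ` is a Generalized Bartlett ordering of `G`: no triangle of `D^σ(G)` consists of three
non-edges of `G`. -/
def IsGBOrdering {n : ℕ} (σ : V ≃ Fin n) (G : SimpleGraph V) : Prop :=
  ¬ ∃ u v w : V,
      ¬ G.Adj u v ∧ ¬ G.Adj v w ∧ ¬ G.Adj u w ∧
      (triangulation σ G).Adj u v ∧ (triangulation σ G).Adj v w ∧
      (triangulation σ G).Adj u w

/-- `G` is a Generalized Bartlett graph: it admits a Generalized Bartlett ordering. -/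
def IsGB (G : SimpleGraph V) : Prop :=
  ∃ (n : ℕ) (σ : V ≃ Fin n), IsGBOrdering σ G

open Matrix
open scoped Classical BigOperators

/-- Column `j` (as a natural number), row `i`, of the modified Cholesky factor `L(L_I, D)`. -/
noncomputable def cholCol (p : ℕ) (G : SimpleGraph (Fin p)) (ℓ : Fin p → Fin p → ℝ)
    (D : Fin p → ℝ) : ℕ → Fin p → ℝ
  | j => fun i =>
    if hj : j < p then
      if (i : ℕ) = j then 1
      else if (i : ℕ) < j then 0
      else if G.Adj i ⟨j, hj⟩ then ℓ i ⟨j, hj⟩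
      else -(∑ k ∈ (Finset.range j).attach,
          cholCol p G ℓ D k.1 i * cholCol p G ℓ D k.1 ⟨j, hj⟩ *
            D ⟨k.1, (Finset.mem_range.mp k.2).trans hj⟩) / D ⟨j, hj⟩
    else 0
termination_by j => j
decreasing_by all_goals exact Finset.mem_range.mp k.2

/-- The modified Cholesky factor `L(L_I, D)` as a matrix. -/
noncomputable def cholMat (p : ℕ) (G : SimpleGraph (Fin p)) (ℓ : Fin p → Fin p → ℝ)
    (D : Fin p → ℝ) : Matrix (Fin p) (Fin p) ℝ :=
  Matrix.of fun i j => cholCol p G ℓ D (j : ℕ) i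

/-- `Ω(L_I, D) = L D Lᵀ`. -/
noncomputable def OmegaMat (p : ℕ) (G : SimpleGraph (Fin p)) (ℓ : Fin p → Fin p → ℝ)
    (D : Fin p → ℝ) : Matrix (Fin p) (Fin p) ℝ :=
  cholMat p G ℓ D * Matrix.diagonal D * (cholMat p G ℓ D)ᵀ

/-- `ν_j = #{i : i > j, (i,j) ∈ E}`. -/
noncomputable def nuG (p : ℕ) (G : SimpleGraph (Fin p)) (j : Fin p) : ℕ :=
  (Finset.univ.filter fun i : Fin p => j < i ∧ G.Adj i j).card

/-- Recover `D` from `D̃`:  `D_k = ∏_{l ≤ k} D̃_l`. -/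
noncomputable def Dof (p : ℕ) (Dt : Fin p → ℝ) (k : Fin p) : ℝ :=
  ∏ l ∈ Finset.Iic k, Dt l

/-- Update the `(r,s)` entry of a function of two indices. -/
def updEntry (p : ℕ) (ℓ : Fin p → Fin p → ℝ) (r s : Fin p) (t : ℝ) :
    Fin p → Fin p → ℝ :=
  fun i j => if i = r ∧ j = s then t else ℓ i j

/-- The unnormalized generalized `G`-Wishart density `π*_{U,δ}`, as a function of the full
Cholesky data `(ℓ, D)`:  `(∏_j D_j^{(δ_j + 2ν_j)/2}) · exp(−tr(Ω U)/2)`. -/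
noncomputable def gwDensFull (p : ℕ) (G : SimpleGraph (Fin p))
    (U : Matrix (Fin p) (Fin p) ℝ) (δ : Fin p → ℝ)
    (ℓ : Fin p → Fin p → ℝ) (D : Fin p → ℝ) : ℝ :=
  (∏ j : Fin p, D j ^ ((δ j + 2 * (nuG p G j : ℝ)) / 2)) *
    Real.exp (-(OmegaMat p G ℓ D * U).trace / 2)

/-- The density `π̃` in `(L_I, D̃)` coordinates:
`π̃(L_I, D̃) = (∏_{k=1}^{p−1} D̃_k^{p−k}) · π*_{U,δ}(L_I, D(D̃))` (1-based indices;
0-based below: `k` with `(k : ℕ) < p − 1`, exponent `p − 1 − k`). -/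
noncomputable def tildeDens (p : ℕ) (G : SimpleGraph (Fin p))
    (U : Matrix (Fin p) (Fin p) ℝ) (δ : Fin p → ℝ)
    (ℓ : Fin p → Fin p → ℝ) (Dt : Fin p → ℝ) : ℝ :=
  (∏ k ∈ Finset.univ.filter fun k : Fin p => (k : ℕ) < p - 1,
      Dt k ^ (p - 1 - (k : ℕ))) *
    gwDensFull p G U δ ℓ (Dof p Dt)

open Function

section Triangulation

variable {n : ℕ} (σ : V ≃ Fin n) (G : SimpleGraph V)

theorem triSeq_monotone : Monotone (triSeq σ G) :=
  monotone_nat_of_le_succ fun _ _ _ h => Or.inl h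

theorem le_triangulation : G ≤ triangulation σ G :=
  triSeq_monotone σ G (Nat.zero_le _)

variable {σ G}

theorem triSeq_adj_of_le {u v : V} {s : ℕ} (hs : (σ v : ℕ) ≤ s)
    (hadj : (triSeq σ G s).Adj u v) : (triSeq σ G (σ v)).Adj u v := by
  induction s with
  | zero => rwa [Nat.le_zero.mp hs]
  | succ s ih =>
    rcases hs.eq_or_lt with hs | hs
    · rwa [hs]
    · refine ih (Nat.lt_succ_iff.mp hs) ?_
      rcases hadj with hadj | ⟨-, -, -, hsv, -⟩
      · exact hadj
      · omega

theorem triangulation_adj_of_adj_of_adj {i j r : V} (hrj : σ r < σ j) (hji : σ j < σ i)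
    (hir : (triangulation σ G).Adj i r) (hjr : (triangulation σ G).Adj j r) :
    (triangulation σ G).Adj i j := by
  have hr : (σ r : ℕ) ≤ n - 2 := by have := (σ i).isLt; omega
  have hstep : (triSeq σ G (σ r + 1)).Adj i j := by
    refine Or.inr ⟨fun h => hji.ne (h ▸ rfl), (σ r).isLt, hrj.trans hji, hrj, ?_, ?_⟩
    · simpa using triSeq_adj_of_le hr hir
    · simpa using triSeq_adj_of_le hr hjr
  exact triSeq_monotone σ G (by omega) hstep

theorem IsGBOrdering.adj_or_adj (hGB : IsGBOrdering σ G) {i j m : V} (hij : ¬G.Adj i j)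
    (htij : (triangulation σ G).Adj i j) (him : (triangulation σ G).Adj i m)
    (hjm : (triangulation σ G).Adj j m) : G.Adj i m ∨ G.Adj j m := by
  by_contra! h
  exact hGB ⟨i, m, j, h.1, fun h' => h.2 h'.symm, hij, him, hjm.symm, htij⟩

end Triangulation

section Cholesky

variable {p : ℕ} {G : SimpleGraph (Fin p)} {ℓ : Fin p → Fin p → ℝ} {D : Fin p → ℝ}

theorem cholMat_self (i : Fin p) : cholMat p G ℓ D i i = 1 := by
  rw [cholMat, of_apply, cholCol]
  simp

theorem cholMat_of_lt {i j : Fin p} (h : i < j) : cholMat p G ℓ D i j = 0 := by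
  rw [cholMat, of_apply, cholCol]
  simp [Fin.lt_def.mp h, Fin.val_ne_of_ne h.ne]

theorem cholMat_of_adj {i j : Fin p} (h : j < i) (hadj : G.Adj i j) :
    cholMat p G ℓ D i j = ℓ i j := by
  rw [cholMat, of_apply, cholCol]
  simp [Fin.val_ne_of_ne h.ne', (Fin.lt_def.mp h).not_gt, hadj]

theorem cholMat_of_not_adj {i j : Fin p} (h : j < i) (hadj : ¬G.Adj i j) :
    cholMat p G ℓ D i j =
      -(∑ m ∈ Finset.Iio j, cholMat p G ℓ D i m * cholMat p G ℓ D j m * D m) / D j := by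
  rw [cholMat, of_apply, cholCol]
  simp only [j.isLt, dite_true, Fin.val_ne_of_ne h.ne', (Fin.lt_def.mp h).not_gt, if_false,
    Fin.eta, hadj]
  congr 2
  exact Finset.sum_bij' (fun m _ => ⟨m.1, (Finset.mem_range.mp m.2).trans j.isLt⟩)
    (fun m hm => ⟨m, Finset.mem_range.mpr (Fin.lt_def.mp (Finset.mem_Iio.mp hm))⟩)
    (fun m _ => Finset.mem_Iio.mpr (Finset.mem_range.mp m.2)) (by simp) (by simp) (by simp)
    (fun _ _ => rfl)

theorem cholMat_eq_zero_of_not_adj {i j : Fin p} (h : j < i)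
    (hij : ¬(triangulation (Equiv.refl (Fin p)) G).Adj i j) : cholMat p G ℓ D i j = 0 := by
  induction j using WellFoundedLT.induction generalizing i with
  | _ j ih =>
  rw [cholMat_of_not_adj h fun hG => hij (le_triangulation _ G hG)]
  suffices hterm : ∀ m ∈ Finset.Iio j, cholMat p G ℓ D i m * cholMat p G ℓ D j m * D m = 0 by
    simp [Finset.sum_eq_zero hterm]
  intro m hm
  have hmj : m < j := Finset.mem_Iio.mp hm
  by_cases him : (triangulation (Equiv.refl (Fin p)) G).Adj i m
  · by_cases hjm : (triangulation (Equiv.refl (Fin p)) G).Adj j m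
    · exact absurd (triangulation_adj_of_adj_of_adj hmj h him hjm) hij
    · simp [ih m hmj hmj hjm]
  · simp [ih m hmj (hmj.trans h) him]

theorem cholMat_congr {D' : Fin p → ℝ} (i : Fin p) {j : Fin p}
    (hD : ∀ m ≤ j, D m = D' m) : cholMat p G ℓ D i j = cholMat p G ℓ D' i j := by
  induction j using WellFoundedLT.induction generalizing i with
  | _ j ih =>
  rcases lt_or_ge i j with hij | hji
  · rw [cholMat_of_lt hij, cholMat_of_lt hij]
  rcases hji.eq_or_lt with rfl | hji
  · rw [cholMat_self, cholMat_self]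
  by_cases hadj : G.Adj i j
  · rw [cholMat_of_adj hji hadj, cholMat_of_adj hji hadj]
  rw [cholMat_of_not_adj hji hadj, cholMat_of_not_adj hji hadj, hD j le_rfl]
  refine congrArg (fun s => -s / D' j) (Finset.sum_congr rfl fun m hm => ?_)
  have hmj : m < j := Finset.mem_Iio.mp hm
  have hD' : ∀ m' ≤ m, D m' = D' m' := fun m' h => hD m' (h.trans hmj.le)
  rw [ih m hmj i hD', ih m hmj j hD', hD m hmj.le]

theorem cholMat_smul {c : ℝ} (hc : c ≠ 0) : cholMat p G ℓ (c • D) = cholMat p G ℓ D := by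
  ext i j
  induction j using WellFoundedLT.induction generalizing i with
  | _ j ih =>
  rcases lt_or_ge i j with hij | hji
  · rw [cholMat_of_lt hij, cholMat_of_lt hij]
  rcases hji.eq_or_lt with rfl | hji
  · rw [cholMat_self, cholMat_self]
  by_cases hadj : G.Adj i j
  · rw [cholMat_of_adj hji hadj, cholMat_of_adj hji hadj]
  rw [cholMat_of_not_adj hji hadj, cholMat_of_not_adj hji hadj]
  have hsum : ∑ m ∈ Finset.Iio j, cholMat p G ℓ (c • D) i m * cholMat p G ℓ (c • D) j m *
      (c • D) m = c * ∑ m ∈ Finset.Iio j, cholMat p G ℓ D i m * cholMat p G ℓ D j m * D m := by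
    rw [Finset.mul_sum]
    refine Finset.sum_congr rfl fun m hm => ?_
    rw [ih m (Finset.mem_Iio.mp hm), ih m (Finset.mem_Iio.mp hm), Pi.smul_apply, smul_eq_mul]
    ring
  rw [hsum, Pi.smul_apply, smul_eq_mul, neg_mul_eq_mul_neg, mul_div_mul_left _ _ hc]

theorem trace_OmegaMat_mul (U : Matrix (Fin p) (Fin p) ℝ) :
    (OmegaMat p G ℓ D * U).trace =
      ∑ j, D j * ((cholMat p G ℓ D)ᵀ j ⬝ᵥ U *ᵥ (cholMat p G ℓ D)ᵀ j) := by
  simp only [OmegaMat, trace, Matrix.diag_apply, mul_apply, diagonal_apply, transpose_apply,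
    dotProduct, mulVec, Finset.mul_sum, Finset.sum_mul, mul_ite, mul_zero, Finset.sum_ite_eq',
    Finset.mem_univ, if_true]
  rw [Finset.sum_congr rfl fun i _ => Finset.sum_comm, Finset.sum_comm]
  refine Finset.sum_congr rfl fun j _ => ?_
  rw [Finset.sum_comm]
  exact Finset.sum_congr rfl fun i _ => Finset.sum_congr rfl fun r _ => by ring

end Cholesky

def IsAffineInInv (f : ℝ → ℝ) : Prop :=
  ∃ a b : ℝ, ∀ t > 0, f t = a + b / t

namespace IsAffineInInv

variable {f g : ℝ → ℝ}

theorem const (c : ℝ) : IsAffineInInv fun _ => c :=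
  ⟨c, 0, fun _ _ => by simp⟩

theorem const_div (c : ℝ) : IsAffineInInv fun t => c / t :=
  ⟨0, c, fun _ _ => by simp⟩

theorem congr (hf : IsAffineInInv f) (h : ∀ t > 0, f t = g t) : IsAffineInInv g := by
  obtain ⟨a, b, hab⟩ := hf
  exact ⟨a, b, fun t ht => (h t ht).symm.trans (hab t ht)⟩

theorem mul_const (hf : IsAffineInInv f) (c : ℝ) : IsAffineInInv fun t => f t * c := by
  obtain ⟨a, b, hab⟩ := hf
  exact ⟨a * c, b * c, fun t ht => by dsimp only; rw [hab t ht]; ring⟩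

theorem const_mul (hf : IsAffineInInv f) (c : ℝ) : IsAffineInInv fun t => c * f t := by
  simpa only [mul_comm c] using hf.mul_const c

theorem sum {ι : Type*} (s : Finset ι) {F : ι → ℝ → ℝ} (hF : ∀ i ∈ s, IsAffineInInv (F i)) :
    IsAffineInInv fun t => ∑ i ∈ s, F i t := by
  choose a b hab using hF
  refine ⟨∑ i ∈ s.attach, a i.1 i.2, ∑ i ∈ s.attach, b i.1 i.2, fun t ht => ?_⟩
  dsimp only
  rw [Finset.sum_div, ← Finset.sum_add_distrib, ← Finset.sum_attach s]
  exact Finset.sum_congr rfl fun i _ => hab i.1 i.2 t ht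

theorem eq_of_forall_eq {a b c : ℝ} (h : ∀ t > 0, a + b / t = c) : a = c := by
  have h1 := h 1 one_pos
  have h2 := h 2 two_pos
  rw [div_one] at h1
  linarith

end IsAffineInInv

theorem mul_dotProduct_mulVec_add_inv_smul {n : Type*} [Fintype n] (U : Matrix n n ℝ)
    (A B : n → ℝ) (c : ℝ) {t : ℝ} (ht : t ≠ 0) :
    t * c * ((A + t⁻¹ • B) ⬝ᵥ U *ᵥ (A + t⁻¹ • B)) =
      c * (A ⬝ᵥ U *ᵥ A) * t + c * (A ⬝ᵥ U *ᵥ B + B ⬝ᵥ U *ᵥ A) + c * (B ⬝ᵥ U *ᵥ B) / t := by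
  simp only [mulVec_add, mulVec_smul, add_dotProduct, dotProduct_add, smul_dotProduct,
    dotProduct_smul, smul_eq_mul]
  field_simp
  ring

theorem Finset.prod_update_pow {ι M : Type*} [CommMonoid M] [DecidableEq ι] (s : Finset ι)
    (f : ι → M) (n : ι → ℕ) {k : ι} (hk : k ∉ s → n k = 0) (t : M) :
    ∏ x ∈ s, update f k t x ^ n x = t ^ n k * ∏ x ∈ s, update f k 1 x ^ n x := by
  by_cases hks : k ∈ s
  · have hsplit (u : M) : ∏ x ∈ s, update f k u x ^ n x = u ^ n k * ∏ x ∈ s \ {k}, f x ^ n x := by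
      rw [← Finset.prod_update_of_mem hks]
      exact Finset.prod_congr rfl fun x _ => apply_update (fun x y => y ^ n x) f k u x
    rw [hsplit, hsplit, one_pow, one_mul]
  · rw [hk hks, pow_zero, one_mul]
    refine Finset.prod_congr rfl fun x hx => ?_
    rw [update_of_ne (ne_of_mem_of_not_mem hx hks), update_of_ne (ne_of_mem_of_not_mem hx hks)]

section Update

variable {p : ℕ} (Dt : Fin p → ℝ) {k j : Fin p} (t : ℝ)

theorem Dof_update_of_lt (h : j < k) : Dof p (update Dt k t) j = Dof p Dt j :=
  Finset.prod_congr rfl fun _ hl => update_of_ne ((Finset.mem_Iic.mp hl).trans_lt h).ne _ _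

theorem Dof_update_of_le (h : k ≤ j) :
    Dof p (update Dt k t) j = t * Dof p (update Dt k 1) j := by
  rw [Dof, Dof, Finset.prod_update_of_mem (Finset.mem_Iic.mpr h),
    Finset.prod_update_of_mem (Finset.mem_Iic.mpr h), one_mul]

variable {Dt} in
theorem Dof_pos (hDt : ∀ l, 0 < Dt l) (j : Fin p) : 0 < Dof p Dt j :=
  Finset.prod_pos fun l _ => hDt l

variable {Dt} in
theorem update_one_pos (hDt : ∀ l, 0 < Dt l) (k l : Fin p) : 0 < update Dt k 1 l := by
  rcases eq_or_ne l k with rfl | hl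
  · simp
  · simpa [hl] using hDt l

variable {Dt t} in
theorem prod_Dof_update_rpow (hDt : ∀ l, 0 < Dt l) (e : Fin p → ℝ) (ht : 0 < t) :
    ∏ j, Dof p (update Dt k t) j ^ e j =
      t ^ (∑ j ∈ Finset.Ici k, e j) * ∏ j, Dof p (update Dt k 1) j ^ e j := by
  have hDt1 := update_one_pos hDt k
  have hfactor : ∀ j, Dof p (update Dt k t) j ^ e j =
      (if k ≤ j then t ^ e j else 1) * Dof p (update Dt k 1) j ^ e j := fun j => by
    split_ifs with hkj
    · rw [Dof_update_of_le Dt t hkj, Real.mul_rpow ht.le (Dof_pos hDt1 j).le]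
    · rw [one_mul, Dof_update_of_lt Dt t (not_le.mp hkj), Dof_update_of_lt Dt 1 (not_le.mp hkj)]
  rw [Finset.prod_congr rfl fun j _ => hfactor j, Finset.prod_mul_distrib, Finset.prod_ite,
    Finset.prod_const_one, mul_one, Finset.filter_le_eq_Ici, Real.rpow_sum_of_pos ht]

end Update

section Conditional

variable {p : ℕ} {G : SimpleGraph (Fin p)} {ℓ : Fin p → Fin p → ℝ} {Dt : Fin p → ℝ} {k : Fin p}
  {U : Matrix (Fin p) (Fin p) ℝ}

theorem cholMat_update_of_lt (i : Fin p) {j : Fin p} (h : j < k) (t : ℝ) :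
    cholMat p G ℓ (Dof p (update Dt k t)) i j = cholMat p G ℓ (Dof p Dt) i j :=
  cholMat_congr i fun _ hm => Dof_update_of_lt Dt t (hm.trans_lt h)

theorem cholMat_update_of_val_eq_zero (hk : (k : ℕ) = 0) {t : ℝ} (ht : t ≠ 0) :
    cholMat p G ℓ (Dof p (update Dt k t)) = cholMat p G ℓ (Dof p (update Dt k 1)) := by
  have hscale : Dof p (update Dt k t) = t • Dof p (update Dt k 1) :=
    funext fun j => Dof_update_of_le Dt t (Fin.le_def.mpr (by omega))
  rw [hscale, cholMat_smul ht]

theorem isAffineInInv_fill_term (hGB : IsGBOrdering (Equiv.refl (Fin p)) G)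
    (hDt : ∀ l, 0 < Dt l) {i j m : Fin p} (hkj : k ≤ j) (hmj : m < j) (hji : j < i)
    (hij : ¬G.Adj i j) (htij : (triangulation (Equiv.refl (Fin p)) G).Adj i j)
    (ih : ∀ i', IsAffineInInv fun t => cholMat p G ℓ (Dof p (update Dt k t)) i' m) :
    IsAffineInInv fun t => cholMat p G ℓ (Dof p (update Dt k t)) i m *
      cholMat p G ℓ (Dof p (update Dt k t)) j m * Dof p (update Dt k t) m /
        Dof p (update Dt k t) j := by
  have hcj := (Dof_pos (update_one_pos hDt k) j).ne'
  rcases lt_or_ge m k with hmk | hkm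
  · refine (IsAffineInInv.const_div (cholMat p G ℓ (Dof p Dt) i m *
      cholMat p G ℓ (Dof p Dt) j m * Dof p Dt m / Dof p (update Dt k 1) j)).congr fun t ht => ?_
    rw [cholMat_update_of_lt i hmk, cholMat_update_of_lt j hmk, Dof_update_of_lt Dt t hmk,
      Dof_update_of_le Dt t hkj]
    field_simp
  have hratio : ∀ t > 0, Dof p (update Dt k t) m / Dof p (update Dt k t) j =
      Dof p (update Dt k 1) m / Dof p (update Dt k 1) j := fun t ht => by
    rw [Dof_update_of_le Dt t hkm, Dof_update_of_le Dt t hkj, mul_div_mul_left _ _ ht.ne']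
  by_cases him : (triangulation (Equiv.refl (Fin p)) G).Adj i m
  swap
  · exact (IsAffineInInv.const 0).congr fun t _ => by
      rw [cholMat_eq_zero_of_not_adj (hmj.trans hji) him]; ring
  by_cases hjm : (triangulation (Equiv.refl (Fin p)) G).Adj j m
  swap
  · exact (IsAffineInInv.const 0).congr fun t _ => by
      rw [cholMat_eq_zero_of_not_adj hmj hjm]; ring
  rcases hGB.adj_or_adj hij htij him hjm with hG | hG
  · refine (((ih j).const_mul (ℓ i m)).mul_const
      (Dof p (update Dt k 1) m / Dof p (update Dt k 1) j)).congr fun t ht => ?_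
    rw [cholMat_of_adj (hmj.trans hji) hG, mul_div_assoc, hratio t ht]
  · refine ((ih i).mul_const
      (ℓ j m * (Dof p (update Dt k 1) m / Dof p (update Dt k 1) j))).congr fun t ht => ?_
    rw [cholMat_of_adj hmj hG, mul_div_assoc, hratio t ht, mul_assoc]

theorem isAffineInInv_cholMat_update (hGB : IsGBOrdering (Equiv.refl (Fin p)) G)
    (hDt : ∀ l, 0 < Dt l) (i j : Fin p) :
    IsAffineInInv fun t => cholMat p G ℓ (Dof p (update Dt k t)) i j := by
  induction j using WellFoundedLT.induction generalizing i with
  | _ j ih =>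
  rcases lt_or_ge j k with hjk | hkj
  · exact (IsAffineInInv.const _).congr fun t _ => (cholMat_update_of_lt i hjk t).symm
  rcases lt_or_ge i j with hij | hji
  · exact (IsAffineInInv.const 0).congr fun t _ => (cholMat_of_lt hij).symm
  rcases hji.eq_or_lt with rfl | hji
  · exact (IsAffineInInv.const 1).congr fun t _ => (cholMat_self _).symm
  by_cases hadj : G.Adj i j
  · exact (IsAffineInInv.const _).congr fun t _ => (cholMat_of_adj hji hadj).symm
  by_cases htij : (triangulation (Equiv.refl (Fin p)) G).Adj i j
  swap
  · exact (IsAffineInInv.const 0).congr fun t _ => (cholMat_eq_zero_of_not_adj hji htij).symm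
  refine ((IsAffineInInv.sum (Finset.Iio j) fun m hm => isAffineInInv_fill_term hGB hDt hkj
    (Finset.mem_Iio.mp hm) hji hadj htij (ih m (Finset.mem_Iio.mp hm))).const_mul (-1)).congr
    fun t _ => ?_
  rw [cholMat_of_not_adj hji hadj, neg_div, Finset.sum_div]
  ring

theorem exists_column_cholMat_update (hGB : IsGBOrdering (Equiv.refl (Fin p)) G)
    (hDt : ∀ l, 0 < Dt l) (j : Fin p) :
    ∃ A B : Fin p → ℝ, (∀ t > 0, (cholMat p G ℓ (Dof p (update Dt k t)))ᵀ j = A + t⁻¹ • B) ∧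
      ((k : ℕ) = 0 → B = 0) := by
  by_cases hk : (k : ℕ) = 0
  · refine ⟨(cholMat p G ℓ (Dof p (update Dt k 1)))ᵀ j, 0, fun t ht => ?_, fun _ => rfl⟩
    rw [cholMat_update_of_val_eq_zero hk ht.ne', smul_zero, add_zero]
  choose A B hAB using fun i => isAffineInInv_cholMat_update (ℓ := ℓ) (k := k) hGB hDt i j
  refine ⟨A, B, fun t ht => funext fun i => ?_, fun hk' => absurd hk' hk⟩
  simp [hAB i t ht, div_eq_inv_mul]

theorem exists_column_term_eq (hGB : IsGBOrdering (Equiv.refl (Fin p)) G) (hU : U.PosDef)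
    (hDt : ∀ l, 0 < Dt l) (j : Fin p) :
    ∃ P Q R : ℝ, 0 ≤ P ∧ 0 ≤ R ∧ ((k : ℕ) = 0 → R = 0) ∧ (j = k → 0 < P) ∧
      ∀ t > 0, Dof p (update Dt k t) j * ((cholMat p G ℓ (Dof p (update Dt k t)))ᵀ j ⬝ᵥ
        U *ᵥ (cholMat p G ℓ (Dof p (update Dt k t)))ᵀ j) = P * t + Q + R / t := by
  rcases lt_or_ge j k with hjk | hkj
  · set x := (cholMat p G ℓ (Dof p Dt))ᵀ j
    refine ⟨0, Dof p Dt j * (x ⬝ᵥ U *ᵥ x), 0, le_rfl, le_rfl, fun _ => rfl,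
      fun h => absurd hjk (h ▸ lt_irrefl j), fun t _ => ?_⟩
    have hx : (cholMat p G ℓ (Dof p (update Dt k t)))ᵀ j = x :=
      funext fun i => cholMat_update_of_lt i hjk t
    rw [hx, Dof_update_of_lt Dt t hjk]
    ring
  obtain ⟨A, B, hAB, hB0⟩ := exists_column_cholMat_update (ℓ := ℓ) (k := k) hGB hDt j
  have hc := (Dof_pos (update_one_pos hDt k) j).le
  refine ⟨Dof p (update Dt k 1) j * (A ⬝ᵥ U *ᵥ A),
    Dof p (update Dt k 1) j * (A ⬝ᵥ U *ᵥ B + B ⬝ᵥ U *ᵥ A), Dof p (update Dt k 1) j * (B ⬝ᵥ U *ᵥ B),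
    mul_nonneg hc (by simpa using hU.posSemidef.dotProduct_mulVec_nonneg A),
    mul_nonneg hc (by simpa using hU.posSemidef.dotProduct_mulVec_nonneg B),
    fun hk => by simp [hB0 hk], fun hjk => ?_, fun t ht => ?_⟩
  · subst hjk
    have hAj : A j = 1 := IsAffineInInv.eq_of_forall_eq fun t ht => by
      have h := congrFun (hAB t ht) j
      rw [transpose_apply, cholMat_self] at h
      rw [h, Pi.add_apply, Pi.smul_apply, smul_eq_mul, div_eq_inv_mul]
    have hA : A ≠ 0 := fun h => by simp [h] at hAj
    exact mul_pos (Dof_pos (update_one_pos hDt j) j) (by simpa using hU.dotProduct_mulVec_pos hA)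
  · rw [Dof_update_of_le Dt t hkj, hAB t ht, mul_dotProduct_mulVec_add_inv_smul _ _ _ _ ht.ne']

theorem exists_trace_OmegaMat_update_eq (hGB : IsGBOrdering (Equiv.refl (Fin p)) G)
    (hU : U.PosDef) (hDt : ∀ l, 0 < Dt l) :
    ∃ a Q b : ℝ, 0 < a ∧ 0 ≤ b ∧ ((k : ℕ) = 0 → b = 0) ∧
      ∀ t > 0, (OmegaMat p G ℓ (Dof p (update Dt k t)) * U).trace = a * t + Q + b / t := by
  choose P Q R hP hR hR0 hPk hterm using exists_column_term_eq (ℓ := ℓ) (k := k) hGB hU hDt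
  refine ⟨∑ j, P j, ∑ j, Q j, ∑ j, R j,
    Finset.sum_pos' (fun j _ => hP j) ⟨k, Finset.mem_univ k, hPk k rfl⟩,
    Finset.sum_nonneg fun j _ => hR j, fun hk => Finset.sum_eq_zero fun j _ => hR0 j hk,
    fun t ht => ?_⟩
  rw [trace_OmegaMat_mul, Finset.sum_congr rfl fun j _ => hterm j t ht, Finset.sum_add_distrib,
    Finset.sum_add_distrib, Finset.sum_mul, Finset.sum_div]

end Conditional

theorem gig_full_conditional_general (p : ℕ) (G : SimpleGraph (Fin p))
    (hGB : IsGBOrdering (Equiv.refl (Fin p)) G)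
    (U : Matrix (Fin p) (Fin p) ℝ) (hU : U.PosDef)
    (δ : Fin p → ℝ)
    (k : Fin p) (ℓ : Fin p → Fin p → ℝ) (Dt : Fin p → ℝ) (hDt : ∀ k', 0 < Dt k') :
    ∃ C a b : ℝ, 0 < C ∧ 0 < a ∧ 0 ≤ b ∧ ((k : ℕ) = 0 → b = 0) ∧
      ∀ t : ℝ, 0 < t →
        tildeDens p G U δ ℓ (Function.update Dt k t) =
          C * t ^ (((p : ℝ) - 1 - (k : ℕ)) +
              ∑ l ∈ Finset.Ici k, (δ l + 2 * (nuG p G l : ℝ)) / 2) *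
            Real.exp (-(a * t + b / t)) := by
  obtain ⟨a, Q, b, ha, hb, hb0, htrace⟩ :=
    exists_trace_OmegaMat_update_eq (ℓ := ℓ) (k := k) hGB hU hDt
  have hDt1 := update_one_pos hDt k
  refine ⟨(∏ l ∈ Finset.univ.filter fun l : Fin p => (l : ℕ) < p - 1,
      update Dt k 1 l ^ (p - 1 - (l : ℕ))) *
    (∏ j, Dof p (update Dt k 1) j ^ ((δ j + 2 * (nuG p G j : ℝ)) / 2)) *
    Real.exp (-Q / 2), a / 2, b / 2, ?_, by positivity, by positivity,
    fun hk => by rw [hb0 hk, zero_div], fun t ht => ?_⟩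
  · exact mul_pos (mul_pos (Finset.prod_pos fun l _ => pow_pos (hDt1 l) _)
      (Finset.prod_pos fun j _ => Real.rpow_pos_of_pos (Dof_pos hDt1 j) _)) (Real.exp_pos _)
  have hk : (k : ℕ) < p := k.isLt
  have hexponent : ((p - 1 - (k : ℕ) : ℕ) : ℝ) = (p : ℝ) - 1 - (k : ℕ) := by
    rw [Nat.cast_sub (by omega), Nat.cast_sub (by omega), Nat.cast_one]
  rw [tildeDens, gwDensFull,
    Finset.prod_update_pow _ _ _ (fun hks => by simp at hks; omega),
    prod_Dof_update_rpow hDt _ ht, htrace t ht, Real.rpow_add ht, ← hexponent,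
    Real.rpow_natCast, show -(a * t + Q + b / t) / 2 = -Q / 2 + -(a / 2 * t + b / 2 / t) by ring,
    Real.exp_add]
  ring

/-- Theorem 5, part 2: under a Generalized Bartlett identity ordering, the full
conditional of each `D̃_k` is a Generalized Inverse Gaussian kernel
`C · t^{α_k} · exp(−(a t + b/t))` with `C > 0`, `a > 0`, `b ≥ 0`, where
`α_k = (p−k) + ∑_{l=k}^p (δ_l + 2ν_l)/2` (1-based; 0-based as displayed); for `k = 1`
(0-based `k = 0`) one may take `b = 0`, i.e. a Gamma kernel. -/
theorem gig_full_conditional (p : ℕ) (G : SimpleGraph (Fin p))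
    (hGB : IsGBOrdering (Equiv.refl (Fin p)) G)
    (U : Matrix (Fin p) (Fin p) ℝ) (hU : U.PosDef)
    (δ : Fin p → ℝ) (hδ : ∀ i, 0 < δ i)
    (k : Fin p) (ℓ : Fin p → Fin p → ℝ) (Dt : Fin p → ℝ) (hDt : ∀ k', 0 < Dt k') :
    ∃ C a b : ℝ, 0 < C ∧ 0 < a ∧ 0 ≤ b ∧ ((k : ℕ) = 0 → b = 0) ∧
      ∀ t : ℝ, 0 < t →
        tildeDens p G U δ ℓ (Function.update Dt k t) =
          C * t ^ (((p : ℝ) - 1 - (k : ℕ)) +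
              ∑ l ∈ Finset.Ici k, (δ l + 2 * (nuG p G l : ℝ)) / 2) *
            Real.exp (-(a * t + b / t)) :=
  gig_full_conditional_general p G hGB U hU δ k ℓ Dt hDt
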